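/- arXiv:1806.00684 — 2 statements merged into one kernel-verified Lean document; each statement's English description precedes it below -/
import Mathlib

section
/- Fix n ≥ 1 and encode the faces of the n-cube as functions F : {1,…,n} → {0,1,−}. For such F set dim F := #{i : F(i) = −}, z(F) := #{i : F(i) = 0}, p(F) := #{(i,j) : i < j, F(i) = 0, F(j) = −}, and n(F) := p(F) + z(F). Let F be a face, S := {i : F(i) = −}, and let S′ ⊆ S. Define faces F′ and F″ by: F′(i) = 0 for i ∈ S′ and F′(i) = F(i) otherwise; F″(i) = 1 for i ∈ S∖S′ and F″(i) = F(i) otherwise. Let v : S → {0,1} be the indicator function of S∖S′ (with S ordered by the index order), and set ∗(F′,F) := #{j ∈ S : v(j) = 1} + #{(i,j) ∈ S×S : i < j, v(i) = 0, v(j) = 1}. Then n(F′) + n(F″) + ∗(F′,F) ≡ p(F) + dim F (mod 2); in particular this sum's parity is independent of the choice of S′. -/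
/-!
Faces of the `n`-cube are encoded as functions `F : Fin n → Fin 3`, where the value
`0` stands for the symbol `0`, the value `1` for the symbol `1`, and the value `2` for
the symbol `-` (a varying coordinate).
-/

/-- `dim F`: the number of `-` entries of a face. -/
def faceDim {n : ℕ} (F : Fin n → Fin 3) : ℕ :=
  (Finset.univ.filter fun i => F i = 2).card

/-- `z F`: the number of `0` entries of a face. -/
def faceZeros {n : ℕ} (F : Fin n → Fin 3) : ℕ :=
  (Finset.univ.filter fun i => F i = 0).card

/-- `p F`: the number of pairs `i < j` with `F i = 0` and `F j = -`. -/
def facePairs {n : ℕ} (F : Fin n → Fin 3) : ℕ :=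
  (Finset.univ.filter fun p : Fin n × Fin n => p.1 < p.2 ∧ F p.1 = 0 ∧ F p.2 = 2).card

/-- `n F := p F + z F`. -/
def faceSign {n : ℕ} (F : Fin n → Fin 3) : ℕ := facePairs F + faceZeros F

/-!
Every pair counted by `p(F')`, `p(F'')` or `p(F)` ends in `S`; split these pairs by whether the
second entry lies in `S'`. With `A` the pairs `(0, S \ S')` of `F`, `C` the pairs `(0, S')` of `F`
and `B` the `01`-pairs of `∗(F',F)`, this gives `p(F') = A + B`, `p(F'') = C` and `p(F) = A + C`.
Together with `z(F') = z(F) + #S'`, `z(F'') = z(F)` and `dim F = #(S \ S') + #S'`, the left hand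
side equals `p(F) + dim F + 2 (z(F) + B)` exactly.
-/

open Finset

lemma Finset.card_filter_or_of_disjoint {α : Type*} [DecidableEq α] (s : Finset α)
    {p q : α → Prop} [DecidablePred p] [DecidablePred q] (h : ∀ x ∈ s, p x → ¬q x) :
    #(s.filter fun x => p x ∨ q x) = #(s.filter p) + #(s.filter q) := by
  rw [filter_or, card_union_of_disjoint (disjoint_filter.2 h)]

section

variable {n : ℕ} (F : Fin n → Fin 3) (S' : Finset (Fin n))

def zeroFace : Fin n → Fin 3 := fun i => if i ∈ S' then 0 else F i

def oneFace : Fin n → Fin 3 := fun i => if F i = 2 ∧ i ∉ S' then 1 else F i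

def zeroOnePairs : ℕ :=
  #{p : Fin n × Fin n | p.1 < p.2 ∧ p.1 ∈ S' ∧ F p.2 = 2 ∧ p.2 ∉ S'}

variable {F S'}

lemma zeroFace_eq_zero_iff {i : Fin n} : zeroFace F S' i = 0 ↔ F i = 0 ∨ i ∈ S' := by
  by_cases h : i ∈ S' <;> simp [zeroFace, h]

lemma zeroFace_eq_two_iff {i : Fin n} : zeroFace F S' i = 2 ↔ F i = 2 ∧ i ∉ S' := by
  by_cases h : i ∈ S' <;> simp [zeroFace, h]

lemma oneFace_eq_zero_iff {i : Fin n} : oneFace F S' i = 0 ↔ F i = 0 := by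
  unfold oneFace; split_ifs <;> grind

lemma oneFace_eq_two_iff {i : Fin n} : oneFace F S' i = 2 ↔ F i = 2 ∧ i ∈ S' := by
  unfold oneFace; split_ifs <;> grind

lemma faceZeros_zeroFace (hS' : ∀ i ∈ S', F i = 2) :
    faceZeros (zeroFace F S') = faceZeros F + #S' := by
  simp only [faceZeros, zeroFace_eq_zero_iff]
  rw [card_filter_or_of_disjoint _ fun i _ h hi => by simp [hS' i hi] at h, filter_univ_mem]

lemma faceZeros_oneFace : faceZeros (oneFace F S') = faceZeros F := by
  simp only [faceZeros, oneFace_eq_zero_iff]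

lemma faceDim_eq_card_add_card (hS' : ∀ i ∈ S', F i = 2) :
    faceDim F = #{i | F i = 2 ∧ i ∉ S'} + #S' := by
  have hcard := card_filter_or_of_disjoint univ (p := fun i => F i = 2 ∧ i ∉ S')
    (q := (· ∈ S')) fun i _ h hi => h.2 hi
  rw [filter_univ_mem] at hcard
  rw [faceDim, ← hcard]
  exact congrArg card (filter_congr fun i _ => by grind)

lemma facePairs_eq_add :
    facePairs F = #{p : Fin n × Fin n | p.1 < p.2 ∧ F p.1 = 0 ∧ F p.2 = 2 ∧ p.2 ∉ S'}
      + #{p : Fin n × Fin n | p.1 < p.2 ∧ F p.1 = 0 ∧ F p.2 = 2 ∧ p.2 ∈ S'} := by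
  rw [facePairs, ← card_filter_or_of_disjoint _ fun p _ h h' => h.2.2.2 h'.2.2.2]
  exact congrArg card (filter_congr fun p _ => by tauto)

lemma facePairs_zeroFace (hS' : ∀ i ∈ S', F i = 2) :
    facePairs (zeroFace F S') =
      #{p : Fin n × Fin n | p.1 < p.2 ∧ F p.1 = 0 ∧ F p.2 = 2 ∧ p.2 ∉ S'}
      + zeroOnePairs F S' := by
  rw [facePairs, zeroOnePairs,
    ← card_filter_or_of_disjoint _ fun p _ h h' => by simp [hS' _ h'.2.1] at h]
  refine congrArg card (filter_congr fun p _ => ?_)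
  rw [zeroFace_eq_zero_iff, zeroFace_eq_two_iff]
  tauto

lemma facePairs_oneFace :
    facePairs (oneFace F S') =
      #{p : Fin n × Fin n | p.1 < p.2 ∧ F p.1 = 0 ∧ F p.2 = 2 ∧ p.2 ∈ S'} := by
  simp only [facePairs, oneFace_eq_zero_iff, oneFace_eq_two_iff]

lemma faceSign_zeroFace_add_faceSign_oneFace (hS' : ∀ i ∈ S', F i = 2) :
    faceSign (zeroFace F S') + faceSign (oneFace F S')
      + (#{i | F i = 2 ∧ i ∉ S'} + zeroOnePairs F S')
      = facePairs F + faceDim F + 2 * (faceZeros F + zeroOnePairs F S') := by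
  rw [faceSign, faceSign, facePairs_zeroFace hS', facePairs_oneFace, faceZeros_zeroFace hS',
    faceZeros_oneFace, facePairs_eq_add (S' := S'), faceDim_eq_card_add_card hS']
  ring

end

theorem cube_sign_identity_general (n : ℕ) (F : Fin n → Fin 3)
    (S' : Finset (Fin n)) (hS' : ∀ i ∈ S', F i = 2) :
    faceSign (fun i => if i ∈ S' then 0 else F i)
      + faceSign (fun i => if F i = 2 ∧ i ∉ S' then 1 else F i)
      + ((Finset.univ.filter fun i => F i = 2 ∧ i ∉ S').card
        + (Finset.univ.filter fun p : Fin n × Fin n =>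
            p.1 < p.2 ∧ p.1 ∈ S' ∧ F p.2 = 2 ∧ p.2 ∉ S').card)
      ≡ facePairs F + faceDim F [MOD 2] :=
  (congrArg (· % 2) (faceSign_zeroFace_add_faceSign_oneFace hS')).trans
    (Nat.add_mul_mod_self_left _ _ _)

/-- **Sign identity for cubes of chain complexes.**
Let `F` be a face of the `n`-cube, `S = {i : F i = -}`, and `S' ⊆ S`.  Let `F'` be obtained
from `F` by setting the entries of `S'` to `0` and `F''` by setting the entries of `S \ S'`
to `1`.  Let `∗(F',F)` be the number of `j ∈ S \ S'` plus the number of pairs `i < j` in `S`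
with `i ∈ S'` and `j ∉ S'` (the count of `1`s and of `01`-subtuples in the indicator tuple of
`S \ S'` inside `S`).  Then
`n(F') + n(F'') + ∗(F',F) ≡ p(F) + dim F (mod 2)`;
in particular the parity of the left hand side does not depend on `S'`. -/
theorem cube_sign_identity (n : ℕ) (hn : 1 ≤ n) (F : Fin n → Fin 3)
    (S' : Finset (Fin n)) (hS' : ∀ i ∈ S', F i = 2) :
    faceSign (fun i => if i ∈ S' then 0 else F i)
      + faceSign (fun i => if F i = 2 ∧ i ∉ S' then 1 else F i)
      + ((Finset.univ.filter fun i => F i = 2 ∧ i ∉ S').card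
        + (Finset.univ.filter fun p : Fin n × Fin n =>
            p.1 < p.2 ∧ p.1 ∈ S' ∧ F p.2 = 2 ∧ p.2 ∉ S').card)
      ≡ facePairs F + faceDim F [MOD 2] :=
  cube_sign_identity_general n F S' hS'
end

section
/- Let X be a compact smooth manifold without boundary (Hausdorff, second countable, modeled on a finite-dimensional real vector space) and let A ⊆ X be a compact subset. Let H₁ ≤ H₂ ≤ ⋯ be a pointwise nondecreasing sequence of smooth functions X → ℝ with H_i(x) < 0 for all x ∈ A and all i. Then the family (H_i) is cofinal in the set C^∞_{A⊂X} of smooth functions X → ℝ that are negative on A, partially ordered by pointwise ≤ (i.e., for every smooth f : X → ℝ with f < 0 on A there exists i with f(x) ≤ H_i(x) for all x ∈ X), if and only if H_i(x) → 0 as i → ∞ for every x ∈ A and H_i(x) → +∞ as i → ∞ for every x ∈ X ∖ A. -/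
open scoped Manifold ContDiff
open Filter Set Topology

/-! If the limits hold, every test function `f` lies strictly below some `H i` at each point;
the open sets `{f < H i}` increase with `i` and cover the compact `X`, so one of them is all of
`X` (a Dini-type argument). Conversely, testing cofinality against negative constants forces
`H i → 0` on `A`, and testing it against smooth Urysohn functions equal to `-1` on `A` and
arbitrarily large at a point outside `A` forces `H i → ∞` there. -/

theorem tendsto_nhds_of_le_of_forall_lt_eventually_le {ι α : Type*} [LinearOrder α]
    [DenselyOrdered α] [TopologicalSpace α] [OrderTopology α] {l : Filter ι} {u : ι → α}
    {a : α} (hle : ∀ i, u i ≤ a) (hlt : ∀ c < a, ∀ᶠ i in l, c ≤ u i) :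
    Tendsto u l (𝓝 a) := by
  refine tendsto_order.2
    ⟨fun b hb => ?_, fun b hb => Eventually.of_forall fun i => (hle i).trans_lt hb⟩
  obtain ⟨c, hbc, hca⟩ := exists_between hb
  exact (hlt c hca).mono fun i hi => hbc.trans_le hi

theorem CompactSpace.exists_forall_le_of_forall_exists_lt {X ι α : Type*} [TopologicalSpace X]
    [CompactSpace X] [SemilatticeSup ι] [Nonempty ι] [LinearOrder α] [TopologicalSpace α]
    [OrderClosedTopology α] {H : ι → X → α} {f : X → α} (hH : ∀ i, Continuous (H i))
    (hmono : ∀ x, Monotone fun i => H i x) (hf : Continuous f) (hlt : ∀ x, ∃ i, f x < H i x) :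
    ∃ i, ∀ x, f x ≤ H i x := by
  have hU : Monotone fun i => {x | f x < H i x} := fun _ _ hij x hx => hx.trans_le (hmono x hij)
  obtain ⟨i, hi⟩ := isCompact_univ.elim_directed_cover _
    (fun i => isOpen_lt hf (hH i)) (fun x _ => mem_iUnion.2 (hlt x)) hU.directed_le
  exact ⟨i, fun x => (hi (mem_univ x)).le⟩

theorem IsClosed.exists_contMDiff_eqOn_neg_one_apply_eq {E H M : Type*} [NormedAddCommGroup E]
    [NormedSpace ℝ E] [FiniteDimensional ℝ E] [TopologicalSpace H]
    (I : ModelWithCorners ℝ E H)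
    [TopologicalSpace M] [T2Space M] [SigmaCompactSpace M] [ChartedSpace H M]
    [IsManifold I ∞ M] {s : Set M} (hs : IsClosed s) {x : M} (hx : x ∉ s) (c : ℝ) :
    ∃ f : M → ℝ, ContMDiff I 𝓘(ℝ) ∞ f ∧ EqOn f (-1) s ∧ f x = c := by
  obtain ⟨g, hg0, hg1, -⟩ := exists_contMDiffMap_zero_one_of_isClosed I (n := ⊤) hs
    isClosed_singleton (disjoint_singleton_right.2 hx)
  refine ⟨fun y => (c + 1) * g y - 1, (contMDiff_const.mul g.contMDiff).sub contMDiff_const,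
    fun y hy => ?_, ?_⟩
  · simp [hg0 hy]
  · simp [hg1 (mem_singleton x)]

theorem cofinal_iff_tendsto_general
    {E : Type*} [NormedAddCommGroup E] [NormedSpace ℝ E] [FiniteDimensional ℝ E]
    {X : Type*} [TopologicalSpace X] [T2Space X]
    [ChartedSpace E X] [IsManifold (modelWithCornersSelf ℝ E) (⊤ : ℕ∞) X]
    [CompactSpace X]
    (A : Set X) (hA : IsCompact A)
    (H : ℕ → X → ℝ)
    (hsm : ∀ i, ContMDiff (modelWithCornersSelf ℝ E) (modelWithCornersSelf ℝ ℝ) (⊤ : ℕ∞) (H i))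
    (hmono : ∀ i x, H i x ≤ H (i + 1) x)
    (hneg : ∀ i, ∀ x ∈ A, H i x < 0) :
    (∀ f : X → ℝ, ContMDiff (modelWithCornersSelf ℝ E) (modelWithCornersSelf ℝ ℝ) (⊤ : ℕ∞) f →
        (∀ x ∈ A, f x < 0) → ∃ i, ∀ x, f x ≤ H i x) ↔
      ((∀ x ∈ A, Filter.Tendsto (fun i => H i x) Filter.atTop (nhds 0)) ∧
        (∀ x ∉ A, Filter.Tendsto (fun i => H i x) Filter.atTop Filter.atTop)) := by
  have hm : ∀ x, Monotone fun i => H i x := fun x => monotone_nat_of_le_succ fun i => hmono i x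
  constructor
  · intro hcof
    have hev : ∀ f : X → ℝ, ContMDiff 𝓘(ℝ, E) 𝓘(ℝ) ∞ f → (∀ x ∈ A, f x < 0) →
        ∀ x, ∀ᶠ i in atTop, f x ≤ H i x := fun f hf hfA x =>
      let ⟨i, hi⟩ := hcof f hf hfA
      eventually_atTop.2 ⟨i, fun _ hn => (hi x).trans (hm x hn)⟩
    refine ⟨fun x hx => ?_, fun x hx => tendsto_atTop.2 fun M => ?_⟩
    · exact tendsto_nhds_of_le_of_forall_lt_eventually_le (fun i => (hneg i x hx).le)
        fun c hc => hev _ contMDiff_const (fun _ _ => hc) x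
    · obtain ⟨f, hf, hfA, hfx⟩ :=
        hA.isClosed.exists_contMDiff_eqOn_neg_one_apply_eq 𝓘(ℝ, E) hx M
      simpa only [hfx] using hev f hf (fun y hy => by simp [hfA hy]) x
  · rintro ⟨hA0, hout⟩ f hf hfA
    refine CompactSpace.exists_forall_le_of_forall_exists_lt (fun i => (hsm i).continuous) hm
      hf.continuous fun x => ?_
    by_cases hx : x ∈ A
    · exact ((hA0 x hx).eventually (eventually_gt_nhds (hfA x hx))).exists
    · exact ((hout x hx).eventually_gt_atTop (f x)).exists

/-- **Cofinality criterion for monotone families of Hamiltonians.**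
Let `X` be a closed (compact, boundaryless) smooth manifold and `A ⊆ X` a compact subset.
Let `H 0 ≤ H 1 ≤ ⋯` be a pointwise nondecreasing sequence of smooth functions `X → ℝ`,
each negative on `A`.  Then the family `(H i)` is cofinal in
`C^∞_{A ⊂ X} = {f smooth | f < 0 on A}` (ordered by pointwise `≤`) if and only if
`H i x → 0` for every `x ∈ A` and `H i x → ∞` for every `x ∉ A`, as `i → ∞`. -/
theorem cofinal_iff_tendsto
    {E : Type*} [NormedAddCommGroup E] [NormedSpace ℝ E] [FiniteDimensional ℝ E]
    {X : Type*} [TopologicalSpace X] [T2Space X] [SecondCountableTopology X]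
    [ChartedSpace E X] [IsManifold (modelWithCornersSelf ℝ E) (⊤ : ℕ∞) X]
    [CompactSpace X]
    (A : Set X) (hA : IsCompact A)
    (H : ℕ → X → ℝ)
    (hsm : ∀ i, ContMDiff (modelWithCornersSelf ℝ E) (modelWithCornersSelf ℝ ℝ) (⊤ : ℕ∞) (H i))
    (hmono : ∀ i x, H i x ≤ H (i + 1) x)
    (hneg : ∀ i, ∀ x ∈ A, H i x < 0) :
    (∀ f : X → ℝ, ContMDiff (modelWithCornersSelf ℝ E) (modelWithCornersSelf ℝ ℝ) (⊤ : ℕ∞) f →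
        (∀ x ∈ A, f x < 0) → ∃ i, ∀ x, f x ≤ H i x) ↔
      ((∀ x ∈ A, Filter.Tendsto (fun i => H i x) Filter.atTop (nhds 0)) ∧
        (∀ x ∉ A, Filter.Tendsto (fun i => H i x) Filter.atTop Filter.atTop)) :=
  cofinal_iff_tendsto_general A hA H hsm hmono hneg
end
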